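/- Let f : ℝ → ℝ be a Schwartz function and define u(x) = (K * f)(x) = ∫_ℝ (1/2) e^{−|x−y|} f(y) dy. Then u is twice continuously differentiable and u(x) − u''(x) = f(x) for all x ∈ ℝ; that is, convolution with K(x) = (1/2) e^{−|x|} inverts the operator 1 − ∂_x². -/

import Mathlib

/-!
Splitting the integral at `y = x` writes `u = K * f` as `2 u(x) = L(x) + R(x)` with
`L(x) = e^{-x} ∫_{y ≤ x} e^{y} f(y) dy` and `R(x) = e^{x} ∫_{y > x} e^{-y} f(y) dy`.
By the fundamental theorem of calculus `L' = f - L` and `R' = R - f`, so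
`2 u' = R - L` and `2 u'' = R + L - 2 f = 2 (u - f)`.
-/

open MeasureTheory SchwartzMap

/-- Convolution with the kernel `K(x) = (1/2) e^{−|x|}`:
`(K * f)(x) = ∫ (1/2) e^{−|x−y|} f(y) dy`. -/
noncomputable def KConv (f : ℝ → ℝ) : ℝ → ℝ :=
  fun x => ∫ y : ℝ, (1 / 2) * Real.exp (-|x - y|) * f y

open Real Set

section HalfLineIntegrals

variable {g : ℝ → ℝ}

theorem hasDerivAt_setIntegral_Iic (hg : Continuous g) (hint : ∀ x, IntegrableOn g (Iic x))
    (x : ℝ) : HasDerivAt (fun z => ∫ t in Iic z, g t) (g x) x := by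
  have hsplit : (fun z => ∫ t in Iic z, g t)
      = fun z => (∫ t in Iic 0, g t) + ∫ t in (0 : ℝ)..z, g t := by
    funext z
    rw [← intervalIntegral.integral_Iic_sub_Iic (hint 0) (hint z), add_sub_cancel]
  rw [hsplit]
  exact (hg.integral_hasStrictDerivAt 0 x).hasDerivAt.const_add _

theorem hasDerivAt_setIntegral_Ioi (hg : Continuous g) (hint : ∀ x, IntegrableOn g (Ioi x))
    (x : ℝ) : HasDerivAt (fun z => ∫ t in Ioi z, g t) (-g x) x := by
  have hsplit : (fun z => ∫ t in Ioi z, g t)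
      = fun z => (∫ t in Ioi 0, g t) - ∫ t in (0 : ℝ)..z, g t := by
    funext z
    rw [← intervalIntegral.integral_Ioi_sub_Ioi' (hint 0) (hint z), sub_sub_cancel]
  rw [hsplit]
  exact (hg.integral_hasStrictDerivAt 0 x).hasDerivAt.const_sub _

end HalfLineIntegrals

section KConv

variable {f : ℝ → ℝ}

theorem integrableOn_Iic_exp_mul (hf : Integrable f) (x : ℝ) :
    IntegrableOn (fun t => exp t * f t) (Iic x) := by
  refine hf.integrableOn.bdd_mul (c := exp x) continuous_exp.aestronglyMeasurable ?_
  filter_upwards [ae_restrict_mem measurableSet_Iic] with t ht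
  rw [norm_of_nonneg (exp_pos t).le]
  exact exp_le_exp.2 ht

theorem integrableOn_Ioi_exp_neg_mul (hf : Integrable f) (x : ℝ) :
    IntegrableOn (fun t => exp (-t) * f t) (Ioi x) := by
  refine hf.integrableOn.bdd_mul (c := exp (-x)) (by fun_prop) ?_
  filter_upwards [ae_restrict_mem measurableSet_Ioi] with t ht
  rw [norm_of_nonneg (exp_pos _).le]
  exact exp_le_exp.2 (neg_le_neg (le_of_lt ht))

noncomputable def KConvLeft (f : ℝ → ℝ) (x : ℝ) : ℝ :=
  exp (-x) * ∫ t in Iic x, exp t * f t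

noncomputable def KConvRight (f : ℝ → ℝ) (x : ℝ) : ℝ :=
  exp x * ∫ t in Ioi x, exp (-t) * f t

theorem KConv_eq_half_add (hf : Integrable f) (x : ℝ) :
    KConv f x = 1 / 2 * (KConvLeft f x + KConvRight f x) := by
  have hkernel : Integrable (fun y => 1 / 2 * exp (-|x - y|) * f y) := by
    refine hf.bdd_mul (c := 1 / 2) (by fun_prop) (ae_of_all _ fun y => ?_)
    have hexp : exp (-|x - y|) ≤ 1 := exp_le_one_iff.2 (neg_nonpos.2 (abs_nonneg _))
    rw [norm_of_nonneg (by positivity)]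
    linarith
  rw [KConv, ← intervalIntegral.integral_Iic_add_Ioi hkernel.integrableOn hkernel.integrableOn,
    KConvLeft, KConvRight, ← integral_const_mul, ← integral_const_mul, mul_add,
    ← integral_const_mul, ← integral_const_mul]
  congr 1
  · refine setIntegral_congr_fun measurableSet_Iic fun y hy => ?_
    rw [abs_of_nonneg (sub_nonneg.2 hy), neg_sub, sub_eq_add_neg, exp_add]
    ring
  · refine setIntegral_congr_fun measurableSet_Ioi fun y hy => ?_
    rw [abs_sub_comm, abs_of_pos (sub_pos.2 hy), neg_sub, sub_eq_add_neg, exp_add]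
    ring

variable (hf : Continuous f) (hfi : Integrable f)
include hf hfi

theorem hasDerivAt_KConvLeft (x : ℝ) :
    HasDerivAt (KConvLeft f) (f x - KConvLeft f x) x := by
  refine ((hasDerivAt_neg x).exp.mul
    (hasDerivAt_setIntegral_Iic (by fun_prop) (integrableOn_Iic_exp_mul hfi) x)).congr_deriv ?_
  rw [KConvLeft, ← mul_assoc, ← exp_add, neg_add_cancel, exp_zero]
  ring

theorem hasDerivAt_KConvRight (x : ℝ) :
    HasDerivAt (KConvRight f) (KConvRight f x - f x) x := by
  refine ((hasDerivAt_exp x).mul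
    (hasDerivAt_setIntegral_Ioi (by fun_prop) (integrableOn_Ioi_exp_neg_mul hfi) x)).congr_deriv ?_
  rw [KConvRight, mul_neg, ← mul_assoc, ← exp_add, add_neg_cancel, exp_zero]
  ring

theorem hasDerivAt_KConv (x : ℝ) :
    HasDerivAt (KConv f) (1 / 2 * (KConvRight f x - KConvLeft f x)) x := by
  rw [funext (KConv_eq_half_add hfi)]
  refine (((hasDerivAt_KConvLeft hf hfi x).add (hasDerivAt_KConvRight hf hfi x)).const_mul
    (1 / 2 : ℝ)).congr_deriv ?_
  ring

theorem hasDerivAt_deriv_KConv (x : ℝ) :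
    HasDerivAt (deriv (KConv f)) (KConv f x - f x) x := by
  rw [funext fun x => (hasDerivAt_KConv hf hfi x).deriv, KConv_eq_half_add hfi]
  refine (((hasDerivAt_KConvRight hf hfi x).sub (hasDerivAt_KConvLeft hf hfi x)).const_mul
    (1 / 2 : ℝ)).congr_deriv ?_
  ring

end KConv

theorem stmt5 (f : 𝓢(ℝ, ℝ)) :
    ContDiff ℝ 2 (KConv (⇑f)) ∧
    ∀ x : ℝ, KConv (⇑f) x - deriv (deriv (KConv (⇑f))) x = f x := by
  have hf := f.continuous
  have hfi := f.integrable (μ := volume)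
  have hu : Differentiable ℝ (KConv f) := fun x => (hasDerivAt_KConv hf hfi x).differentiableAt
  have hu'' : deriv (deriv (KConv f)) = fun x => KConv f x - f x :=
    funext fun x => (hasDerivAt_deriv_KConv hf hfi x).deriv
  refine ⟨?_, fun x => by rw [hu'']; ring⟩
  rw [show (2 : WithTop ℕ∞) = 1 + 1 from rfl, contDiff_succ_iff_deriv, contDiff_one_iff_deriv,
    hu'']
  exact ⟨hu, by simp, fun x => (hasDerivAt_deriv_KConv hf hfi x).differentiableAt,
    hu.continuous.sub hf⟩
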